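/- Let f:(X,x₀)→(Y,y₀) be a pointed continuous map of compact path-connected metric spaces and let n ≥ 1. Then dcat(f) < n if and only if f admits a lift with respect to the fibration B_n(p_Y): P(Y)_n → Y, i.e., there is a continuous map g : X → P(Y)_n with B_n(p_Y) ∘ g = f. -/

import Mathlib

/-!
STATEMENT 0: Let f:(X,x₀)→(Y,y₀) be a pointed continuous map of compact path-connected
metric spaces and let n ≥ 1. Then dcat(f) < n if and only if f admits a lift with respect
to the fibration B_n(p_Y): P(Y)_n → Y, i.e. there is a continuous map g : X → P(Y)_n with
B_n(p_Y) ∘ g = f.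
-/

open Metric Set MeasureTheory

noncomputable section
universe u

/-! ### Distributional category and LS-category -/

/-- Every metric space is equipped with its Borel σ-algebra. -/
local instance (priority := 50) borelMeasurable (Z : Type*) [MetricSpace Z] :
    MeasurableSpace Z := borel Z

local instance (priority := 50) borelBorelSpace (Z : Type*) [MetricSpace Z] :
    @BorelSpace Z _ (borelMeasurable Z) := ⟨rfl⟩

/-- `P(Y)`: the space of paths in `Y` ending at the basepoint `y₀` (with the uniform metric). -/
abbrev EndPaths (Y : Type*) [MetricSpace Y] (y₀ : Y) : Type _ :=
  {φ : C(unitInterval, Y) // φ 1 = y₀}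

/-- `B_n(Z)`: the space of probability measures on `Z` supported on at most `n` points,
equipped with the Lévy–Prokhorov metric. -/
abbrev FinSuppMeasures (n : ℕ) (Z : Type*) [MetricSpace Z] : Type _ :=
  {μ : MeasureTheory.LevyProkhorov (MeasureTheory.ProbabilityMeasure Z) //
    ∃ s : Finset Z, s.card ≤ n ∧ (MeasureTheory.LevyProkhorov.toMeasureEquiv μ) (↑s : Set Z) = 1}

/-- `dcat f ≤ n` for a pointed map `f : (X,x₀) → (Y,y₀)`: there is a continuous map
`H : X → B_{n+1}(P(Y))` such that `H x` is supported on paths starting at `f x`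
(and ending at `y₀`), i.e. `H x ∈ B_{n+1}(P(f x, y₀))` for all `x`. -/
def DcatLE {X Y : Type*} [MetricSpace X] [MetricSpace Y] (f : X → Y) (y₀ : Y) (n : ℕ) : Prop :=
  ∃ H : C(X, FinSuppMeasures (n + 1) (EndPaths Y y₀)),
    ∀ x : X, (MeasureTheory.LevyProkhorov.toMeasureEquiv (H x).1)
      {φ : EndPaths Y y₀ | (φ : C(unitInterval, Y)) 0 = f x} = 1

/-- The distributional category of a pointed map `f : (X,x₀) → (Y,y₀)`. -/
noncomputable def dcat {X Y : Type*} [MetricSpace X] [MetricSpace Y] (f : X → Y) (y₀ : Y) :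
    ℕ∞ :=
  sInf {m : ℕ∞ | ∃ n : ℕ, m = n ∧ DcatLE f y₀ n}

/-- The distributional category of a pointed space, `dcat X := dcat (id_X)`. -/
noncomputable def dcatSpace (X : Type*) [MetricSpace X] (x₀ : X) : ℕ∞ :=
  dcat (id : X → X) x₀

/-- `cat X ≤ n`: `X` admits an open cover by `n+1` sets, each of whose inclusions
into `X` is null-homotopic. -/
def CatLE (X : Type*) [TopologicalSpace X] (n : ℕ) : Prop :=
  ∃ U : Fin (n + 1) → Set X, (∀ i, IsOpen (U i)) ∧ (⋃ i, U i) = Set.univ ∧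
    ∀ i, ContinuousMap.Nullhomotopic ⟨(Subtype.val : U i → X), continuous_subtype_val⟩

/-- The Lusternik–Schnirelmann category of a space. -/
noncomputable def cat (X : Type*) [TopologicalSpace X] : ℕ∞ :=
  sInf {m : ℕ∞ | ∃ n : ℕ, m = n ∧ CatLE X n}

/-- A space is aspherical if all its homotopy groups in degrees `≥ 2` vanish. -/
def Aspherical (X : Type*) [TopologicalSpace X] : Prop :=
  ∀ k : ℕ, 2 ≤ k → ∀ x : X, Subsingleton (HomotopyGroup (Fin k) X x)

/-- Euclidean `n`-space, the model space of topological `n`-manifolds. -/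
abbrev EucSp (n : ℕ) := EuclideanSpace ℝ (Fin n)

/-- `P(Y)_n`: the fiberwise application of `B_n` to the path fibration `p_Y : P(Y) → Y`,
i.e. the measures in `B_n(P(Y))` supported inside a single fiber `p_Y⁻¹(y)`. -/
abbrev FiberwiseMeasures (n : ℕ) (Y : Type*) [MetricSpace Y] (y₀ : Y) : Type _ :=
  {μ : FinSuppMeasures n (EndPaths Y y₀) //
    ∃ y : Y, (MeasureTheory.LevyProkhorov.toMeasureEquiv μ.1)
      {φ : EndPaths Y y₀ | (φ : C(unitInterval, Y)) 0 = y} = 1}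

/-- The fibration `B_n(p_Y) : P(Y)_n → Y`, sending a measure supported in the fiber
`p_Y⁻¹(y)` to the point `y`. -/
noncomputable def finSuppPathFibration (n : ℕ) (Y : Type*) [MetricSpace Y] (y₀ : Y) :
    FiberwiseMeasures n Y y₀ → Y :=
  fun μ => μ.2.choose

/-!
A measure in `P(Y)_n` lies over a unique point, because a probability measure cannot give full
mass to two disjoint fibres; so `B_n(p_Y) ∘ g = f` says exactly that `g x ∈ B_n(P(f x, y₀))`,
which is the defining condition of `dcat f ≤ n - 1`. Since the conditions `dcat f ≤ k` are
monotone in `k`, this is `dcat f < n`.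
-/

theorem MeasureTheory.ProbabilityMeasure.eq_of_apply_preimage_singleton_eq_one
    {Z W : Type*} [TopologicalSpace Z] [MeasurableSpace Z] [OpensMeasurableSpace Z]
    [TopologicalSpace W] [T1Space W] (μ : ProbabilityMeasure Z) {p : Z → W}
    (hp : Continuous p) {w w' : W} (h : μ (p ⁻¹' {w}) = 1) (h' : μ (p ⁻¹' {w'}) = 1) :
    w = w' := by
  have ae_fiber : ∀ v : W, μ (p ⁻¹' {v}) = 1 → ∀ᵐ z ∂(μ : Measure Z), p z = v := fun v hv =>
    (mem_ae_iff_prob_eq_one (isClosed_singleton.preimage hp).measurableSet).2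
      (by rw [← ProbabilityMeasure.ennreal_coeFn_eq_coeFn_toMeasure, hv, ENNReal.coe_one])
  obtain ⟨z, rfl, rfl⟩ := ((ae_fiber w h).and (ae_fiber w' h')).exists
  rfl

def FinSuppMeasures.inclusion {k m : ℕ} (hkm : k ≤ m) (Z : Type*) [MetricSpace Z] :
    C(FinSuppMeasures k Z, FinSuppMeasures m Z) where
  toFun μ := ⟨μ.1, let ⟨s, hs, hμs⟩ := μ.2; ⟨s, hs.trans hkm, hμs⟩⟩
  continuous_toFun := continuous_subtype_val.subtype_mk _

theorem finSuppPathFibration_eq_of_apply_eq_one {Y : Type*} [MetricSpace Y] {y₀ : Y} {n : ℕ}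
    (μ : FiberwiseMeasures n Y y₀) {y : Y}
    (h : LevyProkhorov.toMeasureEquiv μ.1.1
      {φ : EndPaths Y y₀ | (φ : C(unitInterval, Y)) 0 = y} = 1) :
    finSuppPathFibration n Y y₀ μ = y := by
  -- otherwise the subtype σ-algebra, not the Borel one the measures live on, is synthesized
  let := borelMeasurable (EndPaths Y y₀)
  exact ProbabilityMeasure.eq_of_apply_preimage_singleton_eq_one _
    ((continuous_eval_const 0).comp continuous_subtype_val) μ.2.choose_spec h

section

variable {X Y : Type*} [MetricSpace X] [MetricSpace Y] {f : X → Y} {y₀ : Y}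

theorem DcatLE.mono {k m : ℕ} (h : DcatLE f y₀ k) (hkm : k ≤ m) : DcatLE f y₀ m :=
  let ⟨H, hH⟩ := h
  ⟨(FinSuppMeasures.inclusion (Nat.succ_le_succ hkm) _).comp H, hH⟩

theorem dcat_lt_succ_iff {m : ℕ} : dcat f y₀ < ((m + 1 : ℕ) : ℕ∞) ↔ DcatLE f y₀ m := by
  constructor
  · intro hlt
    obtain ⟨_, ⟨k, rfl, hk⟩, hkm⟩ := sInf_lt_iff.1 hlt
    exact hk.mono (Nat.lt_succ_iff.1 (Nat.cast_lt.1 hkm))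
  · intro h
    exact (show dcat f y₀ ≤ m from sInf_le ⟨m, rfl, h⟩).trans_lt (Nat.cast_lt.2 m.lt_succ_self)

theorem dcatLE_iff_exists_lift {m : ℕ} :
    DcatLE f y₀ m ↔ ∃ g : C(X, FiberwiseMeasures (m + 1) Y y₀),
      finSuppPathFibration (m + 1) Y y₀ ∘ ⇑g = f := by
  constructor
  · rintro ⟨H, hH⟩
    exact ⟨⟨fun x => (⟨H x, f x, hH x⟩ : FiberwiseMeasures (m + 1) Y y₀),
      H.continuous.subtype_mk _⟩,
      funext fun x => finSuppPathFibration_eq_of_apply_eq_one _ (hH x)⟩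
  · rintro ⟨g, hg⟩
    refine ⟨⟨fun x => (g x).1, continuous_subtype_val.comp g.continuous⟩, fun x => ?_⟩
    rw [← congrFun hg x]
    exact (g x).2.choose_spec

end

theorem dcat_lt_iff_exists_lift_general {X Y : Type u} [MetricSpace X] [MetricSpace Y]
    (f : C(X, Y)) (y₀ : Y) (n : ℕ) (hn : 1 ≤ n) :
    dcat (f : X → Y) y₀ < (n : ℕ∞) ↔
      ∃ g : C(X, FiberwiseMeasures n Y y₀),
        (finSuppPathFibration n Y y₀) ∘ ⇑g = ⇑f := by
  obtain ⟨m, rfl⟩ := Nat.exists_eq_add_of_le' hn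
  exact dcat_lt_succ_iff.trans dcatLE_iff_exists_lift

theorem dcat_lt_iff_exists_lift {X Y : Type u} [MetricSpace X] [MetricSpace Y]
    [CompactSpace X] [PathConnectedSpace X] [CompactSpace Y] [PathConnectedSpace Y]
    (f : C(X, Y)) (x₀ : X) (y₀ : Y) (hf : f x₀ = y₀) (n : ℕ) (hn : 1 ≤ n) :
    dcat (f : X → Y) y₀ < (n : ℕ∞) ↔
      ∃ g : C(X, FiberwiseMeasures n Y y₀),
        (finSuppPathFibration n Y y₀) ∘ ⇑g = ⇑f :=
  dcat_lt_iff_exists_lift_general f y₀ n hn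

end
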